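/- For z > 0, define ϕ(z) = (1 − e^{−z})/(1 + e^{z}) and ψ(z) = e^{z} + 2·ln(e^{z} − 1), and set F₁(z) = √(ϕ(z))·sin(ψ(z)), F₂(z) = √(ϕ(z))·cos(ψ(z)). Then for all z > 0: (a) 0 < ϕ(z) < 1; (b) ϕ(z)·ψ′(z) = 1; and (c) F₁ and F₂ are differentiable with F₁(z)F₂′(z) − F₁′(z)F₂(z) = −1. -/

import Mathlib

/-- ϕ(z) = (1 − e^{−z})/(1 + e^{z}), from control law (12) of the paper. -/
noncomputable def phiES (z : ℝ) : ℝ := (1 - Real.exp (-z)) / (1 + Real.exp z)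

/-- ψ(z) = e^{z} + 2·ln(e^{z} − 1), from control law (12) of the paper. -/
noncomputable def psiES (z : ℝ) : ℝ := Real.exp z + 2 * Real.log (Real.exp z - 1)

/-- F₁(z) = √(ϕ(z))·sin(ψ(z)). -/
noncomputable def Fes₁ (z : ℝ) : ℝ := Real.sqrt (phiES z) * Real.sin (psiES z)

/-- F₂(z) = √(ϕ(z))·cos(ψ(z)). -/
noncomputable def Fes₂ (z : ℝ) : ℝ := Real.sqrt (phiES z) * Real.cos (psiES z)

/-!
Writing F₁ + i F₂ = √ϕ · i e^{-iψ}, the Wronskian F₁F₂′ − F₁′F₂ only sees the phase: the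
amplitude derivative cancels and one is left with −ϕψ′. So the whole theorem reduces to the
identity ϕψ′ = 1, where ψ′ = e^z + 2e^z/(e^z − 1) = e^z(e^z + 1)/(e^z − 1) and
ϕ = (e^z − 1)/(e^z(1 + e^z)).
-/

open Real

theorem wronskian_sqrt_mul_sin_cos {φ ψ : ℝ → ℝ} {z : ℝ} (hφ : DifferentiableAt ℝ φ z)
    (hψ : DifferentiableAt ℝ ψ z) (hpos : 0 < φ z) :
    √(φ z) * sin (ψ z) * deriv (fun x => √(φ x) * cos (ψ x)) z
      - deriv (fun x => √(φ x) * sin (ψ x)) z * (√(φ z) * cos (ψ z)) = -(φ z * deriv ψ z) := by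
  have hs := hφ.hasDerivAt.sqrt hpos.ne'
  have hcos : HasDerivAt (fun x => √(φ x) * cos (ψ x)) _ z := hs.mul hψ.hasDerivAt.cos
  have hsin : HasDerivAt (fun x => √(φ x) * sin (ψ x)) _ z := hs.mul hψ.hasDerivAt.sin
  rw [hcos.deriv, hsin.deriv]
  have hsq : √(φ z) * √(φ z) = φ z := mul_self_sqrt hpos.le
  linear_combination (-(√(φ z) * √(φ z) * deriv ψ z)) * sin_sq_add_cos_sq (ψ z) - deriv ψ z * hsq

theorem differentiable_phiES : Differentiable ℝ phiES := by
  unfold phiES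
  exact Differentiable.div (by fun_prop) (by fun_prop) fun x => by positivity

theorem phiES_pos {z : ℝ} (hz : 0 < z) : 0 < phiES z :=
  div_pos (sub_pos.mpr (exp_lt_one_iff.mpr (neg_neg_of_pos hz))) (by positivity)

theorem phiES_lt_one (z : ℝ) : phiES z < 1 := by
  rw [phiES, div_lt_one (by positivity)]
  linarith [exp_pos (-z), exp_pos z]

theorem hasDerivAt_psiES {z : ℝ} (hz : 0 < z) :
    HasDerivAt psiES (exp z + 2 * (exp z / (exp z - 1))) z := by
  have hlog : HasDerivAt (fun x => log (exp x - 1)) (exp z / (exp z - 1)) z := by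
    simpa using ((hasDerivAt_exp z).sub_const 1).log (sub_pos.mpr (one_lt_exp_iff.mpr hz)).ne'
  exact (hasDerivAt_exp z).add (hlog.const_mul 2)

theorem phiES_mul_deriv_psiES {z : ℝ} (hz : 0 < z) : phiES z * deriv psiES z = 1 := by
  have he : exp z - 1 ≠ 0 := (sub_pos.mpr (one_lt_exp_iff.mpr hz)).ne'
  rw [(hasDerivAt_psiES hz).deriv, phiES, exp_neg]
  field_simp
  ring

/-- For all z > 0: (a) 0 < ϕ(z) < 1; (b) ϕ(z)·ψ′(z) = 1; (c) F₁ and F₂ are differentiable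
and satisfy the defining Wronskian relation F₁F₂′ − F₁′F₂ = −1. -/
theorem stmt18 :
    ∀ z : ℝ, 0 < z →
      (0 < phiES z ∧ phiES z < 1) ∧
      phiES z * deriv psiES z = 1 ∧
      (DifferentiableAt ℝ Fes₁ z ∧ DifferentiableAt ℝ Fes₂ z ∧
        Fes₁ z * deriv Fes₂ z - deriv Fes₁ z * Fes₂ z = -1) := by
  intro z hz
  have hφ := differentiable_phiES z
  have hψ := (hasDerivAt_psiES hz).differentiableAt
  have hsqrt := hφ.sqrt (phiES_pos hz).ne'
  refine ⟨⟨phiES_pos hz, phiES_lt_one z⟩, phiES_mul_deriv_psiES hz,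
    hsqrt.mul hψ.sin, hsqrt.mul hψ.cos, ?_⟩
  rw [← phiES_mul_deriv_psiES hz]
  exact wronskian_sqrt_mul_sin_cos hφ hψ (phiES_pos hz)
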